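/- MaxSAT as max of sum over a project-join tree (correctness of valuation): let f be a conjunctive formula over finite variable set X with constraint indicator functions c : 𝔹^X → ℝ for c ∈ C_f, and let 𝒯 = (T, r, γ, π) be a project-join tree of f. Then the valuation of the root satisfies ℱ_r^𝒯 = max over b ⊆ X of Σ_{c ∈ C_f} c(b). -/

import Mathlib

/-- A (rooted) project-join tree shape: leaves carry constraints, internal nodes
carry the set `π(v)` of variables projected (maximized) out at that node. -/
inductive PJT (V C : Type) where
  | leaf : C → PJT V C
  | node : Finset V → List (PJT V C) → PJT V C

/-- The multiset of constraints at the leaves of a project-join tree. -/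
def PJT.leaves {V C : Type} : PJT V C → Multiset C
  | .leaf c => {c}
  | .node _ ts => (ts.attach.map fun t => PJT.leaves t.1).foldr (· + ·) 0
  decreasing_by
    all_goals
      have h := List.sizeOf_lt_of_mem t.2
      simp [PJT.node.sizeOf_spec]
      omega

/-- The multiset of all variables labelling internal nodes of the tree. -/
def PJT.piMultiset {V C : Type} : PJT V C → Multiset V
  | .leaf _ => 0
  | .node π ts => π.val + (ts.attach.map fun t => PJT.piMultiset t.1).foldr (· + ·) 0
  decreasing_by
    all_goals
      have h := List.sizeOf_lt_of_mem t.2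
      simp [PJT.node.sizeOf_spec]
      omega

/-- Descendant condition of a project-join tree: for each internal node `v`, every
constraint of `Cf` containing a variable of `π(v)` appears at a leaf below `v`;
this must hold recursively at all internal nodes. -/
def PJT.desc {V C : Type} (vars : C → Finset V) (Cf : Finset C) : PJT V C → Prop
  | .leaf _ => True
  | .node π ts =>
      (∀ x ∈ π, ∀ c ∈ Cf, x ∈ vars c → c ∈ PJT.leaves (.node π ts)) ∧
      ∀ t ∈ ts.attach, PJT.desc vars Cf t.1
  decreasing_by
    all_goals
      have h := List.sizeOf_lt_of_mem t.2
      simp [PJT.node.sizeOf_spec]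
      omega

/-- The valuation of a node: a leaf is the indicator function of its constraint;
an internal node sums the valuations of its children and maximizes out `π(v)`. -/
noncomputable def PJT.val {V C : Type} [DecidableEq V]
    (ind : C → Finset V → ℝ) : PJT V C → Finset V → ℝ
  | .leaf c => ind c
  | .node π ts => fun b =>
      π.powerset.sup' (Finset.powerset_nonempty π) fun b₂ =>
        (ts.attach.map fun t => PJT.val ind t.1 (b ∪ b₂)).sum
  decreasing_by
    all_goals
      have h := List.sizeOf_lt_of_mem t.2
      simp [PJT.node.sizeOf_spec]
      omega

theorem PJT.strongInduction {V C : Type} {P : PJT V C → Prop}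
    (hleaf : ∀ c, P (.leaf c))
    (hnode : ∀ π ts, (∀ t ∈ ts, P t) → P (.node π ts)) : ∀ t, P t
  | .leaf c => hleaf c
  | .node π ts => hnode π ts fun t ht => PJT.strongInduction hleaf hnode t
  decreasing_by
    have h := List.sizeOf_lt_of_mem ht
    simp [PJT.node.sizeOf_spec]
    omega

lemma attach_map_fst {α β : Type} (l : List α) (f : α → β) :
    (l.attach.map fun t => f t.1) = l.map f := by simp

lemma mem_foldr {α : Type} {l : List (Multiset α)} {a : α} :
    a ∈ l.foldr (· + ·) 0 ↔ ∃ m ∈ l, a ∈ m := by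
  induction l with
  | nil => simp
  | cons x xs ih => simp [ih]

lemma le_foldr {α : Type} {l : List (Multiset α)} {m : Multiset α} (h : m ∈ l) :
    m ≤ l.foldr (· + ·) 0 := by
  induction l with
  | nil => simp at h
  | cons x xs ih =>
    rcases List.mem_cons.mp h with h | h
    · subst h; exact Multiset.le_add_right _ _
    · exact le_trans (ih h) (Multiset.le_add_left _ _)

lemma pairwise_of_nodup_foldr {α : Type} {l : List (Multiset α)}
    (h : (l.foldr (· + ·) 0).Nodup) :
    l.Pairwise (fun m₁ m₂ => ∀ a ∈ m₁, a ∉ m₂) := by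
  induction l with
  | nil => exact .nil
  | cons x xs ih =>
    simp only [List.foldr_cons, Multiset.nodup_add] at h
    refine List.Pairwise.cons ?_ (ih h.2.1)
    intro m hm a ha hma
    exact Multiset.disjoint_left.mp h.2.2 ha (mem_foldr.mpr ⟨m, hm, hma⟩)

lemma desc_mem {V C : Type} (vars : C → Finset V) (Cf : Finset C) :
    ∀ t : PJT V C, PJT.desc vars Cf t →
      ∀ x ∈ PJT.piMultiset t, ∀ c ∈ Cf, x ∈ vars c → c ∈ PJT.leaves t := by
  intro t
  induction t using PJT.strongInduction with
  | hleaf c => intro _ x hx; simp [PJT.piMultiset] at hx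
  | hnode π ts ih =>
    intro hdesc x hx c hc hxc
    rw [PJT.desc] at hdesc
    rw [PJT.piMultiset, attach_map_fst] at hx
    rcases Multiset.mem_add.mp hx with hx | hx
    · exact hdesc.1 x hx c hc hxc
    · obtain ⟨m, hm, hxm⟩ := mem_foldr.mp hx
      obtain ⟨t', ht', rfl⟩ := List.mem_map.mp hm
      have hc' := ih t' ht' (hdesc.2 ⟨t', ht'⟩ (List.mem_attach _ _)) x hxm c hc hxc
      rw [PJT.leaves, attach_map_fst]
      exact mem_foldr.mpr ⟨_, List.mem_map.mpr ⟨t', ht', rfl⟩, hc'⟩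

lemma split_subset {V : Type} [DecidableEq V] {s A B : Finset V} (hs : s ⊆ A ∪ B) :
    s = (s ∩ A) ∪ (s ∩ B) := by
  rw [← Finset.inter_union_distrib_left, Finset.inter_eq_left.mpr hs]

lemma max_add_max {V : Type} [DecidableEq V] (A B : Finset V) (F G : Finset V → ℝ)
    (hF : ∀ s : Finset V, ∀ e ⊆ B, F (s ∪ e) = F s)
    (hG : ∀ s : Finset V, ∀ a ⊆ A, G (s ∪ a) = G s) :
    A.powerset.sup' (Finset.powerset_nonempty A) F
      + B.powerset.sup' (Finset.powerset_nonempty B) G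
      = (A ∪ B).powerset.sup' (Finset.powerset_nonempty _) (fun s => F s + G s) := by
  apply le_antisymm
  · obtain ⟨a, ha, hEa⟩ := Finset.exists_mem_eq_sup' (Finset.powerset_nonempty A) F
    obtain ⟨e, he, hEe⟩ := Finset.exists_mem_eq_sup' (Finset.powerset_nonempty B) G
    rw [hEa, hEe]
    rw [Finset.mem_powerset] at ha he
    have h1 : F a = F (a ∪ e) := (hF a e he).symm
    have h2 : G e = G (a ∪ e) := by rw [Finset.union_comm]; exact (hG e a ha).symm
    rw [h1, h2]
    exact Finset.le_sup' (fun s => F s + G s)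
      (Finset.mem_powerset.mpr (Finset.union_subset_union ha he))
  · apply Finset.sup'_le; intro s hs
    rw [Finset.mem_powerset] at hs
    have h1 : F s = F (s ∩ A) := by
      conv_lhs => rw [split_subset hs]
      exact hF _ _ Finset.inter_subset_right
    have h2 : G s = G (s ∩ B) := by
      conv_lhs => rw [show s = (s ∩ B) ∪ (s ∩ A) by
        rw [Finset.union_comm]; exact split_subset hs]
      exact hG _ _ Finset.inter_subset_right
    rw [h1, h2]
    exact add_le_add
      (Finset.le_sup' F (Finset.mem_powerset.mpr Finset.inter_subset_right))
      (Finset.le_sup' G (Finset.mem_powerset.mpr Finset.inter_subset_right))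

lemma sup'_pow_union {V : Type} [DecidableEq V] (A B : Finset V) (g : Finset V → ℝ) :
    A.powerset.sup' (Finset.powerset_nonempty A)
        (fun a => B.powerset.sup' (Finset.powerset_nonempty B) fun e => g (a ∪ e))
      = (A ∪ B).powerset.sup' (Finset.powerset_nonempty _) g := by
  apply le_antisymm
  · apply Finset.sup'_le; intro a ha
    apply Finset.sup'_le; intro e he
    rw [Finset.mem_powerset] at ha he
    exact Finset.le_sup' g (Finset.mem_powerset.mpr (Finset.union_subset_union ha he))
  · apply Finset.sup'_le; intro s hs
    rw [Finset.mem_powerset] at hs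
    calc g s = g ((s ∩ A) ∪ (s ∩ B)) := by rw [← split_subset hs]
      _ ≤ B.powerset.sup' (Finset.powerset_nonempty B) (fun e => g ((s ∩ A) ∪ e)) :=
        Finset.le_sup' (fun e => g ((s ∩ A) ∪ e))
          (Finset.mem_powerset.mpr Finset.inter_subset_right)
      _ ≤ _ := Finset.le_sup'
          (fun a => B.powerset.sup' (Finset.powerset_nonempty B) fun e => g (a ∪ e))
          (Finset.mem_powerset.mpr Finset.inter_subset_right)

lemma list_key {V C : Type} [DecidableEq V] (ind : C → Finset V → ℝ) (vars : C → Finset V) :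
    ∀ (l : List (PJT V C)) (b : Finset V),
    (∀ t ∈ l, ∀ b' : Finset V, PJT.val ind t b' =
      (PJT.piMultiset t).toFinset.powerset.sup' (Finset.powerset_nonempty _)
        (fun s => ((PJT.leaves t).map (fun c => ind c (b' ∪ s))).sum)) →
    (∀ t ∈ l, ∀ c ∈ PJT.leaves t, ∀ β : Finset V, ind c β = ind c (β ∩ vars c)) →
    (l.Pairwise (fun t₁ t₂ =>
      (∀ c ∈ PJT.leaves t₁, ∀ x ∈ PJT.piMultiset t₂, x ∉ vars c) ∧
      (∀ c ∈ PJT.leaves t₂, ∀ x ∈ PJT.piMultiset t₁, x ∉ vars c))) →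
    (l.map (fun t => PJT.val ind t b)).sum =
      ((l.map PJT.piMultiset).foldr (· + ·) 0).toFinset.powerset.sup' (Finset.powerset_nonempty _)
        (fun s => (((l.map PJT.leaves).foldr (· + ·) 0).map (fun c => ind c (b ∪ s))).sum) := by
  intro l
  induction l with
  | nil => intro b _ _ _; simp
  | cons t ts ih =>
    intro b hval hloc hpw
    obtain ⟨hpw1, hpw2⟩ := List.pairwise_cons.mp hpw
    simp only [List.map_cons, List.sum_cons, List.foldr_cons]
    rw [hval t (List.mem_cons_self) b,
        ih b (fun t' ht' => hval t' (List.mem_cons_of_mem _ ht'))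
             (fun t' ht' => hloc t' (List.mem_cons_of_mem _ ht')) hpw2]
    set P₀ := (PJT.piMultiset t).toFinset with hP₀
    set Q := ((ts.map PJT.piMultiset).foldr (· + ·) 0).toFinset with hQ
    have hQmem : ∀ x ∈ Q, ∃ t' ∈ ts, x ∈ PJT.piMultiset t' := by
      intro x hx
      rw [hQ, Multiset.mem_toFinset] at hx
      obtain ⟨m, hm, hxm⟩ := mem_foldr.mp hx
      obtain ⟨t', ht', rfl⟩ := List.mem_map.mp hm
      exact ⟨t', ht', hxm⟩
    have hF : ∀ s : Finset V, ∀ e ⊆ Q,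
        ((PJT.leaves t).map (fun c => ind c (b ∪ (s ∪ e)))).sum
          = ((PJT.leaves t).map (fun c => ind c (b ∪ s))).sum := by
      intro s e he
      congr 1
      apply Multiset.map_congr rfl
      intro c hc
      rw [hloc t (List.mem_cons_self) c hc (b ∪ (s ∪ e)),
          hloc t (List.mem_cons_self) c hc (b ∪ s)]
      congr 1
      ext x
      simp only [Finset.mem_inter, Finset.mem_union]
      constructor
      · rintro ⟨(hx | hx | hx), hv⟩
        · exact ⟨Or.inl hx, hv⟩
        · exact ⟨Or.inr hx, hv⟩
        · obtain ⟨t', ht', hxt'⟩ := hQmem x (he hx)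
          exact absurd hv ((hpw1 t' ht').1 c hc x hxt')
      · rintro ⟨(hx | hx), hv⟩
        · exact ⟨Or.inl hx, hv⟩
        · exact ⟨Or.inr (Or.inl hx), hv⟩
    have hG : ∀ s : Finset V, ∀ a ⊆ P₀,
        (((ts.map PJT.leaves).foldr (· + ·) 0).map (fun c => ind c (b ∪ (s ∪ a)))).sum
          = (((ts.map PJT.leaves).foldr (· + ·) 0).map (fun c => ind c (b ∪ s))).sum := by
      intro s a ha
      congr 1
      apply Multiset.map_congr rfl
      intro c hc
      obtain ⟨m, hm, hcm⟩ := mem_foldr.mp hc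
      obtain ⟨t', ht', rfl⟩ := List.mem_map.mp hm
      rw [hloc t' (List.mem_cons_of_mem _ ht') c hcm (b ∪ (s ∪ a)),
          hloc t' (List.mem_cons_of_mem _ ht') c hcm (b ∪ s)]
      congr 1
      ext x
      simp only [Finset.mem_inter, Finset.mem_union]
      constructor
      · rintro ⟨(hx | hx | hx), hv⟩
        · exact ⟨Or.inl hx, hv⟩
        · exact ⟨Or.inr hx, hv⟩
        · have hxP : x ∈ PJT.piMultiset t := by
            have := ha hx; rwa [hP₀, Multiset.mem_toFinset] at this
          exact absurd hv ((hpw1 t' ht').2 c hcm x hxP)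
      · rintro ⟨(hx | hx), hv⟩
        · exact ⟨Or.inl hx, hv⟩
        · exact ⟨Or.inr (Or.inl hx), hv⟩
    refine Eq.trans (max_add_max P₀ Q
        (fun a => ((PJT.leaves t).map (fun c => ind c (b ∪ a))).sum)
        (fun e => (((ts.map PJT.leaves).foldr (· + ·) 0).map (fun c => ind c (b ∪ e))).sum)
        hF hG) ?_
    apply Finset.sup'_congr _ (by rw [Multiset.toFinset_add])
    intro s _
    rw [Multiset.map_add, Multiset.sum_add]

lemma key {V C : Type} [DecidableEq V] [DecidableEq C] (Cf : Finset C) (vars : C → Finset V)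
    (ind : C → Finset V → ℝ)
    (hind : ∀ c ∈ Cf, ∀ b : Finset V, ind c b = ind c (b ∩ vars c)) :
    ∀ t : PJT V C, PJT.desc vars Cf t → PJT.leaves t ≤ Cf.val → (PJT.piMultiset t).Nodup →
    ∀ b : Finset V, PJT.val ind t b =
      (PJT.piMultiset t).toFinset.powerset.sup' (Finset.powerset_nonempty _)
        (fun s => ((PJT.leaves t).map (fun c => ind c (b ∪ s))).sum) := by
  intro t
  induction t using PJT.strongInduction with
  | hleaf c =>
    intro _ _ _ b
    simp [PJT.val, PJT.leaves, PJT.piMultiset]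
  | hnode π ts IH =>
    intro hdesc hle hnd b
    rw [PJT.desc] at hdesc
    have hleq : PJT.leaves (PJT.node π ts) = (ts.map PJT.leaves).foldr (· + ·) 0 := by
      rw [PJT.leaves, attach_map_fst]
    have hpieq : PJT.piMultiset (PJT.node π ts)
        = π.val + (ts.map PJT.piMultiset).foldr (· + ·) 0 := by
      rw [PJT.piMultiset, attach_map_fst]
    have hlfold : (ts.map PJT.leaves).foldr (· + ·) 0 ≤ Cf.val := hleq ▸ hle
    have hnodl : ((ts.map PJT.leaves).foldr (· + ·) 0).Nodup :=
      Multiset.nodup_of_le hlfold Cf.nodup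
    have hdesc' : ∀ t' ∈ ts, PJT.desc vars Cf t' := fun t' ht' =>
      hdesc.2 ⟨t', ht'⟩ (List.mem_attach _ _)
    have hle' : ∀ t' ∈ ts, PJT.leaves t' ≤ Cf.val := fun t' ht' =>
      le_trans (le_foldr (List.mem_map.mpr ⟨t', ht', rfl⟩)) hlfold
    have hnd' : ∀ t' ∈ ts, (PJT.piMultiset t').Nodup := fun t' ht' =>
      Multiset.nodup_of_le
        (le_trans (le_foldr (List.mem_map.mpr ⟨t', ht', rfl⟩)) (Multiset.le_add_left _ _))
        (hpieq ▸ hnd)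
    have hdisj : ts.Pairwise (fun t₁ t₂ => ∀ a ∈ PJT.leaves t₁, a ∉ PJT.leaves t₂) :=
      (List.pairwise_map).mp (pairwise_of_nodup_foldr hnodl)
    have hpw : ts.Pairwise (fun t₁ t₂ =>
        (∀ c ∈ PJT.leaves t₁, ∀ x ∈ PJT.piMultiset t₂, x ∉ vars c) ∧
        (∀ c ∈ PJT.leaves t₂, ∀ x ∈ PJT.piMultiset t₁, x ∉ vars c)) := by
      refine hdisj.imp_of_mem ?_
      intro t₁ t₂ h1 h2 hd
      constructor
      · intro c hc x hx hv
        have hcCf : c ∈ Cf := Multiset.mem_of_le (hle' t₁ h1) hc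
        exact hd c hc (desc_mem vars Cf t₂ (hdesc' t₂ h2) x hx c hcCf hv)
      · intro c hc x hx hv
        have hcCf : c ∈ Cf := Multiset.mem_of_le (hle' t₂ h2) hc
        exact hd _ (desc_mem vars Cf t₁ (hdesc' t₁ h1) x hx c hcCf hv) hc
    have hval : ∀ t' ∈ ts, ∀ b' : Finset V, PJT.val ind t' b' =
        (PJT.piMultiset t').toFinset.powerset.sup' (Finset.powerset_nonempty _)
          (fun s => ((PJT.leaves t').map (fun c => ind c (b' ∪ s))).sum) :=
      fun t' ht' => IH t' ht' (hdesc' t' ht') (hle' t' ht') (hnd' t' ht')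
    have hloc : ∀ t' ∈ ts, ∀ c ∈ PJT.leaves t', ∀ β : Finset V,
        ind c β = ind c (β ∩ vars c) :=
      fun t' ht' c hc β => hind c (Multiset.mem_of_le (hle' t' ht') hc) β
    have hv0 : PJT.val ind (PJT.node π ts) b
        = π.powerset.sup' (Finset.powerset_nonempty π)
            (fun b₂ => (ts.map (fun t' => PJT.val ind t' (b ∪ b₂))).sum) := by
      rw [PJT.val]
      exact Finset.sup'_congr _ rfl fun b₂ _ =>
        congrArg List.sum (attach_map_fst ts (fun t' => PJT.val ind t' (b ∪ b₂)))
    rw [hv0, hleq, hpieq, Multiset.toFinset_add, Finset.val_toFinset]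
    refine Eq.trans ?_ (sup'_pow_union π _
      (fun s => (((ts.map PJT.leaves).foldr (· + ·) 0).map (fun c => ind c (b ∪ s))).sum))
    refine Finset.sup'_congr _ rfl ?_
    intro b₂ _
    rw [list_key ind vars ts (b ∪ b₂) hval hloc hpw]
    refine Finset.sup'_congr _ rfl ?_
    intro e _
    rw [Finset.union_assoc]


/-- Correctness of the valuation: for a project-join tree of `f` (leaves in
bijection with `C_f`, the `π(v)` partition `X`, descendant condition satisfied,
each indicator depending only on the variables of its constraint), the valuation
of the root equals the MaxSAT value `max_{b ⊆ X} Σ_{c ∈ C_f} c(b)`. -/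
theorem pjt_valuation_correct {V C : Type} [DecidableEq V] [DecidableEq C]
    (X : Finset V) (Cf : Finset C) (vars : C → Finset V)
    (hvars : ∀ c ∈ Cf, vars c ⊆ X)
    (ind : C → Finset V → ℝ)
    (hind : ∀ c ∈ Cf, ∀ b : Finset V, ind c b = ind c (b ∩ vars c))
    (t : PJT V C)
    (hleaves : PJT.leaves t = Cf.val)
    (hpart : PJT.piMultiset t = X.val)
    (hdesc : PJT.desc vars Cf t) :
    PJT.val ind t ∅
      = X.powerset.sup' (Finset.powerset_nonempty X) fun b => ∑ c ∈ Cf, ind c b := by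
  rw [key Cf vars ind hind t hdesc (hleaves ▸ le_refl _) (hpart ▸ X.nodup) ∅,
      hleaves, hpart]
  refine Finset.sup'_congr _ (by rw [Finset.val_toFinset]) ?_
  intro s _
  simp only [Finset.empty_union]
  rfl
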